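/- There exists an absolute constant c₀ > 0 with the following property. Let s ≥ 2 and 1 ≤ a < b be integers, let 𝒟 ⊆ {0,1,…,s−1} be a digit set with {0,1} ⊆ 𝒟 and r := #𝒟, and let ξ ∈ ℤ ∖ {0} with base-s digits d_j(|ξ|). Set J̄ := #{ a ≤ j ≤ b−1 : 1 ≤ d_{j−1}(|ξ|) + d_j(|ξ|)·s ≤ s² − 2 }. Then |𝔅*(ξ)| ≤ (1 − c₀/(r s⁴))^{J̄} and |ℭ(ξ)| ≤ (1 − c₀/s⁵)^{J̄}. -/

import Mathlib

open Finset

/-- `e(y) = exp(-2πi y)`. -/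
noncomputable def eneg (y : ℝ) : ℂ := Complex.exp (-(2 * Real.pi * Complex.I * (y : ℂ)))

/-- `1̂(θ) = ∫₀¹ e(xθ) dx`. -/
noncomputable def oneHat (θ : ℝ) : ℂ := ∫ x in (0:ℝ)..1, eneg (x * θ)

/-- The `j`-th base-`s` digit of the natural number `n`. -/
def digitOf (s n j : ℕ) : ℕ := n / s ^ j % s

/-- `𝔄(ξ; N, s, a) = N⁻¹ Σ_{k<N} e(ξ k s^{-a})`. -/
noncomputable def Afun (N s a : ℕ) (ξ : ℤ) : ℂ :=
  (N : ℂ)⁻¹ * ∑ k ∈ Finset.range N, eneg ((ξ : ℝ) * k / (s : ℝ) ^ a)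

/-- `ℭ(ξ) = s^{a-b} Σ_{ℓ < s^{b-a}} e(ξ ℓ s^{-b})`. -/
noncomputable def Cfun (s a b : ℕ) (ξ : ℤ) : ℂ :=
  (((s : ℝ) ^ a / (s : ℝ) ^ b : ℝ) : ℂ) *
    ∑ ℓ ∈ Finset.range (s ^ (b - a)), eneg ((ξ : ℝ) * ℓ / (s : ℝ) ^ b)

/-- `𝕃*`: the set of `ℓ < s^{b-a}` all of whose `b-a` base-`s` digits lie in `D`. -/
def Lstar (s a b : ℕ) (D : Finset ℕ) : Finset ℕ :=
  (Finset.range (s ^ (b - a))).filter fun ℓ => ∀ j < b - a, digitOf s ℓ j ∈ D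

/-- `𝔅*(ξ) = r^{a-b} Σ_{ℓ ∈ 𝕃*} e(ξ ℓ s^{-b})`, where `r = #D`. -/
noncomputable def Bstar (s a b : ℕ) (D : Finset ℕ) (ξ : ℤ) : ℂ :=
  (((D.card : ℝ) ^ a / (D.card : ℝ) ^ b : ℝ) : ℂ) *
    ∑ ℓ ∈ Lstar s a b D, eneg ((ξ : ℝ) * ℓ / (s : ℝ) ^ b)

/-- `g(ξ, k; s, 𝒜) = (#𝒜)⁻¹ Σ_{d ∈ 𝒜} e(ξ d s^{-k})`. -/
noncomputable def gfun (s : ℕ) (A : Finset ℕ) (ξ : ℤ) (k : ℕ) : ℂ :=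
  (A.card : ℂ)⁻¹ * ∑ d ∈ A, eneg ((ξ : ℝ) * d / (s : ℝ) ^ k)

/-! 𝔅*(ξ) factors over the digit positions as `∏_{a ≤ j < b} g(ξ, j + 1)`, and every factor has
modulus at most 1. If the digit pair `(d_{j-1}, d_j)` of `|ξ|` is non-extremal, the fractional part
of `|ξ| / s^{j+1}` lies in `[s⁻², 1 - s⁻²]`. Since `0, 1 ∈ 𝒟`, the terms `d = 0, 1` of that factor
add up to `1 + e(ξ / s^{j+1})`, of modulus `2 |cos (π ξ / s^{j+1})| ≤ 2 - 4 / s⁴`, so the factor is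
at most `1 - 4 / (r s⁴)`. ℭ is the case `𝒟 = {0, …, s - 1}`, `r = s`. -/

open Real

lemma eneg_add (x y : ℝ) : eneg (x + y) = eneg x * eneg y := by
  rw [eneg, eneg, eneg, ← Complex.exp_add]
  push_cast
  ring_nf

lemma eneg_zero : eneg 0 = 1 := by simp [eneg]

lemma norm_eneg (x : ℝ) : ‖eneg x‖ = 1 := by
  rw [eneg, Complex.norm_exp]
  simp

lemma one_add_eneg (θ : ℝ) : 1 + eneg θ = eneg (θ / 2) * (2 * cos (π * θ) : ℝ) := by
  rw [eneg, eneg, ← Complex.exp_zero]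
  push_cast
  rw [Complex.two_cos, mul_add, ← Complex.exp_add, ← Complex.exp_add]
  ring_nf

lemma norm_one_add_eneg (θ : ℝ) : ‖1 + eneg θ‖ = 2 * |cos (π * θ)| := by
  rw [one_add_eneg, norm_mul, norm_eneg, one_mul, Complex.norm_real, Real.norm_eq_abs, abs_mul,
    abs_two]

lemma cos_pi_mul_le {δ : ℝ} (h0 : 0 ≤ δ) (h1 : δ ≤ 1) : cos (π * δ) ≤ 1 - 2 * δ ^ 2 := by
  have hsin : δ ≤ sin (π * δ / 2) :=
    calc δ = 2 / π * (π * δ / 2) := by field_simp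
      _ ≤ sin (π * δ / 2) := mul_le_sin (by positivity) (by nlinarith [pi_pos])
  have hcos : cos (π * δ) = 1 - 2 * sin (π * δ / 2) ^ 2 := by
    have := cos_two_mul (π * δ / 2)
    rw [mul_div_cancel₀ _ two_ne_zero, cos_sq'] at this
    linarith
  nlinarith

lemma abs_cos_pi_mul_le_of_fract {x δ : ℝ} (h0 : 0 ≤ δ) (hl : δ ≤ Int.fract x)
    (hu : Int.fract x ≤ 1 - δ) : |cos (π * x)| ≤ 1 - 2 * δ ^ 2 := by
  have hf := Int.fract_lt_one x
  have hperiodic : |cos (π * x)| = |cos (π * Int.fract x)| := by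
    conv_lhs => rw [← Int.floor_add_fract x, mul_add, add_comm, mul_comm π (⌊x⌋ : ℝ)]
    rw [cos_add_int_mul_pi, abs_mul, abs_neg_one_zpow, one_mul]
  have hcos := cos_pi_mul_le h0 (by linarith)
  rw [hperiodic, abs_le]
  constructor
  · have : cos (π * (1 - Int.fract x)) ≤ cos (π * δ) :=
      cos_le_cos_of_nonneg_of_le_pi (by positivity) (by nlinarith [pi_pos]) (by nlinarith [pi_pos])
    rw [mul_one_sub, cos_pi_sub] at this
    linarith
  · have : cos (π * Int.fract x) ≤ cos (π * δ) :=
      cos_le_cos_of_nonneg_of_le_pi (by positivity) (by nlinarith [pi_pos]) (by nlinarith [pi_pos])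
    linarith

lemma digitOf_succ (s n j : ℕ) : digitOf s n (j + 1) = digitOf s (n / s) j := by
  simp only [digitOf, Nat.div_div_eq_div_mul, pow_succ']

lemma mod_pow_add_two (s n i : ℕ) :
    n % s ^ (i + 2) = n % s ^ i + s ^ i * (digitOf s n i + digitOf s n (i + 1) * s) := by
  rw [pow_add, Nat.mod_mul, sq, Nat.mod_mul]
  simp only [digitOf, pow_succ, Nat.div_div_eq_div_mul]
  ring

lemma fract_div_pow_add_two_mem {s : ℕ} (hs : 0 < s) (n i : ℕ)
    (hm1 : 1 ≤ digitOf s n i + digitOf s n (i + 1) * s)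
    (hm2 : digitOf s n i + digitOf s n (i + 1) * s ≤ s ^ 2 - 2) :
    1 / (s : ℝ) ^ 2 ≤ Int.fract ((n : ℝ) / (s : ℝ) ^ (i + 2)) ∧
      Int.fract ((n : ℝ) / (s : ℝ) ^ (i + 2)) ≤ 1 - 1 / (s : ℝ) ^ 2 := by
  set m := digitOf s n i + digitOf s n (i + 1) * s
  have hfract : Int.fract ((n : ℝ) / (s : ℝ) ^ (i + 2)) =
      ((n % s ^ i : ℕ) + (s : ℝ) ^ i * m) / ((s : ℝ) ^ i * (s : ℝ) ^ 2) := by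
    rw [← pow_add, ← Nat.cast_pow, Int.fract_div_natCast_eq_div_natCast_mod, mod_pow_add_two,
      Nat.cast_add, Nat.cast_mul, Nat.cast_pow, pow_add]
  have hlow : ((n % s ^ i : ℕ) : ℝ) < (s : ℝ) ^ i := by exact_mod_cast Nat.mod_lt _ (by positivity)
  have hm1' : (1 : ℝ) ≤ m := by exact_mod_cast hm1
  have hm2' : (m : ℝ) + 2 ≤ (s : ℝ) ^ 2 := by exact_mod_cast (by omega : m + 2 ≤ s ^ 2)
  have hP : (0 : ℝ) < (s : ℝ) ^ i := by positivity
  have hS : (0 : ℝ) < (s : ℝ) ^ 2 := by positivity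
  have hlower : (s : ℝ) ^ i ≤ (n % s ^ i : ℕ) + (s : ℝ) ^ i * m := by
    nlinarith [Nat.cast_nonneg (α := ℝ) (n % s ^ i)]
  have hupper : (n % s ^ i : ℕ) + (s : ℝ) ^ i * m ≤ (s : ℝ) ^ i * ((s : ℝ) ^ 2 - 1) := by
    nlinarith
  rw [hfract, one_sub_div hS.ne', div_le_div_iff₀ hS (by positivity),
    div_le_div_iff₀ (by positivity) hS]
  constructor <;> nlinarith

lemma abs_cos_pi_mul_int_div_pow_le {s : ℕ} (hs : 0 < s) (ξ : ℤ) (i : ℕ)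
    (hm1 : 1 ≤ digitOf s ξ.natAbs i + digitOf s ξ.natAbs (i + 1) * s)
    (hm2 : digitOf s ξ.natAbs i + digitOf s ξ.natAbs (i + 1) * s ≤ s ^ 2 - 2) :
    |cos (π * ((ξ : ℝ) / (s : ℝ) ^ (i + 2)))| ≤ 1 - 2 / (s : ℝ) ^ 4 := by
  obtain ⟨hl, hu⟩ := fract_div_pow_add_two_mem hs ξ.natAbs i hm1 hm2
  have hbound := abs_cos_pi_mul_le_of_fract (by positivity) hl hu
  have heven : cos (π * ((ξ.natAbs : ℝ) / (s : ℝ) ^ (i + 2))) =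
      cos (π * ((ξ : ℝ) / (s : ℝ) ^ (i + 2))) := by
    rw [Nat.cast_natAbs, Int.cast_abs, ← cos_abs (π * ((ξ : ℝ) / _)), abs_mul, abs_div,
      abs_of_pos pi_pos, abs_of_pos (by positivity : (0 : ℝ) < (s : ℝ) ^ (i + 2))]
  rw [← heven]
  convert hbound using 2
  ring

lemma norm_gfun_le_one (s : ℕ) (A : Finset ℕ) (ξ : ℤ) (k : ℕ) : ‖gfun s A ξ k‖ ≤ 1 := by
  rw [gfun, norm_mul, norm_inv, Complex.norm_natCast]
  exact inv_mul_le_one_of_le₀ ((norm_sum_le _ _).trans (by simp [norm_eneg])) (Nat.cast_nonneg _)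

lemma norm_gfun_le_of_zero_mem_of_one_mem (s : ℕ) {A : Finset ℕ} (h0 : 0 ∈ A) (h1 : 1 ∈ A)
    (ξ : ℤ) (k : ℕ) :
    ‖gfun s A ξ k‖ ≤ 1 - (2 - ‖1 + eneg ((ξ : ℝ) / (s : ℝ) ^ k)‖) / #A := by
  set f : ℕ → ℂ := fun d => eneg ((ξ : ℝ) * d / (s : ℝ) ^ k)
  have hpair : ({0, 1} : Finset ℕ) ⊆ A := insert_subset h0 (singleton_subset_iff.2 h1)
  have hcard := card_sdiff_add_card_eq_card hpair
  rw [card_pair zero_ne_one] at hcard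
  have hsum : ∑ d ∈ A, f d = ∑ d ∈ A \ {0, 1}, f d + (1 + eneg ((ξ : ℝ) / (s : ℝ) ^ k)) := by
    rw [← sum_sdiff hpair, sum_pair zero_ne_one]
    simp [f, eneg_zero]
  have hnorm : ‖∑ d ∈ A, f d‖ ≤ (#A - 2 : ℝ) + ‖1 + eneg ((ξ : ℝ) / (s : ℝ) ^ k)‖ := by
    rw [hsum]
    refine (norm_add_le _ _).trans (add_le_add_left ?_ _)
    calc ‖∑ d ∈ A \ {0, 1}, f d‖ ≤ #(A \ {0, 1}) := (norm_sum_le _ _).trans (by simp [f, norm_eneg])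
      _ = (#A - 2 : ℝ) := by rw [← hcard]; push_cast; ring
  have hA : (0 : ℝ) < #A := by exact_mod_cast card_pos.2 ⟨0, h0⟩
  rw [gfun, norm_mul, norm_inv, Complex.norm_natCast, inv_mul_le_iff₀ hA, mul_sub, mul_one,
    mul_div_cancel₀ _ hA.ne']
  linarith

lemma norm_gfun_le_of_digit_pair {s : ℕ} (hs : 0 < s) {D : Finset ℕ} (h0 : 0 ∈ D) (h1 : 1 ∈ D)
    (ξ : ℤ) (i : ℕ)
    (hm1 : 1 ≤ digitOf s ξ.natAbs i + digitOf s ξ.natAbs (i + 1) * s)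
    (hm2 : digitOf s ξ.natAbs i + digitOf s ξ.natAbs (i + 1) * s ≤ s ^ 2 - 2) :
    ‖gfun s D ξ (i + 2)‖ ≤ 1 - 4 / (#D * (s : ℝ) ^ 4) := by
  have hcos := abs_cos_pi_mul_int_div_pow_le hs ξ i hm1 hm2
  refine (norm_gfun_le_of_zero_mem_of_one_mem s h0 h1 ξ (i + 2)).trans ?_
  rw [norm_one_add_eneg, mul_comm (#D : ℝ), ← div_div]
  gcongr
  linarith [show (4 : ℝ) / (s : ℝ) ^ 4 = 2 * (2 / (s : ℝ) ^ 4) by ring]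

lemma mem_Lstar_succ {s : ℕ} (hs : 0 < s) (D : Finset ℕ) {a b ℓ : ℕ} (hab : a ≤ b) :
    ℓ ∈ Lstar s a (b + 1) D ↔ ℓ / s ∈ Lstar s a b D ∧ ℓ % s ∈ D := by
  simp only [Lstar, show b + 1 - a = b - a + 1 by omega, mem_filter, mem_range,
    Nat.div_lt_iff_lt_mul hs, ← pow_succ, Nat.forall_lt_succ_left, digitOf_succ]
  simp only [digitOf, pow_zero, Nat.div_one]
  tauto

lemma sum_Lstar_eneg_eq_prod {s : ℕ} (hs : 0 < s) {D : Finset ℕ} (hD : D ⊆ range s) (x : ℝ)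
    {a b : ℕ} (hab : a ≤ b) :
    ∑ ℓ ∈ Lstar s a b D, eneg (x * ℓ / (s : ℝ) ^ b) =
      ∏ j ∈ Ico a b, ∑ d ∈ D, eneg (x * d / (s : ℝ) ^ (j + 1)) := by
  induction b, hab using Nat.le_induction with
  | base => simp [Lstar, eneg_zero]
  | succ b hab ih =>
    rw [prod_Ico_succ_top hab, ← ih, sum_mul_sum, ← sum_product']
    have hdigit : ∀ d ∈ D, d < s := fun d hd => mem_range.1 (hD hd)
    refine sum_nbij' (fun ℓ => (ℓ / s, ℓ % s)) (fun p => p.2 + s * p.1) ?_ ?_ ?_ ?_ ?_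
    · intro ℓ hℓ
      simpa [mem_product] using (mem_Lstar_succ hs D hab).1 hℓ
    · rintro ⟨m, d⟩ hp
      rw [mem_product] at hp
      rw [mem_Lstar_succ hs D hab, Nat.add_mul_div_left _ _ hs,
        Nat.div_eq_of_lt (hdigit d hp.2), zero_add, Nat.add_mul_mod_self_left,
        Nat.mod_eq_of_lt (hdigit d hp.2)]
      exact hp
    · intro ℓ _
      exact Nat.mod_add_div ℓ s
    · rintro ⟨m, d⟩ hp
      rw [mem_product] at hp
      simp [Nat.add_mul_div_left _ _ hs, Nat.div_eq_of_lt (hdigit d hp.2),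
        Nat.mod_eq_of_lt (hdigit d hp.2)]
    · intro ℓ _
      have hℓ : (ℓ : ℝ) = (ℓ % s : ℕ) + s * (ℓ / s : ℕ) := by
        exact_mod_cast (Nat.mod_add_div ℓ s).symm
      rw [← eneg_add]
      congr 1
      rw [hℓ]
      field_simp
      ring

lemma Bstar_eq_prod_gfun {s : ℕ} (hs : 0 < s) {D : Finset ℕ} (hD : D ⊆ range s)
    (hne : D.Nonempty) (ξ : ℤ) {a b : ℕ} (hab : a ≤ b) :
    Bstar s a b D ξ = ∏ j ∈ Ico a b, gfun s D ξ (j + 1) := by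
  have hr : (#D : ℂ) ≠ 0 := by exact_mod_cast hne.card_pos.ne'
  rw [Bstar, sum_Lstar_eneg_eq_prod hs hD _ hab]
  simp only [gfun, prod_mul_distrib, prod_const, Nat.card_Ico]
  obtain ⟨n, rfl⟩ := Nat.exists_eq_add_of_le hab
  push_cast
  rw [Nat.add_sub_cancel_left, pow_add, inv_pow, div_mul_cancel_left₀ (pow_ne_zero _ hr)]

lemma Cfun_eq_Bstar_range {s : ℕ} (hs : 0 < s) (a b : ℕ) (ξ : ℤ) :
    Cfun s a b ξ = Bstar s a b (range s) ξ := by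
  rw [Cfun, Bstar, card_range, Lstar, filter_true_of_mem]
  exact fun ℓ _ j _ => mem_range.2 (Nat.mod_lt _ hs)

lemma prod_le_pow_card_filter {ι : Type*} (t : Finset ι) (p : ι → Prop) [DecidablePred p]
    {f : ι → ℝ} {c : ℝ} (h0 : ∀ i ∈ t, 0 ≤ f i) (h1 : ∀ i ∈ t, f i ≤ 1)
    (hp : ∀ i ∈ t, p i → f i ≤ c) :
    ∏ i ∈ t, f i ≤ c ^ #(t.filter p) := by
  have hfilter : ∀ {q : ι → Prop} [DecidablePred q] {i}, i ∈ t.filter q → i ∈ t :=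
    fun hi => (mem_filter.1 hi).1
  rw [← prod_filter_mul_prod_filter_not t p]
  calc _ ≤ (∏ i ∈ t with p i, f i) * 1 :=
        mul_le_mul_of_nonneg_left (prod_le_one (fun i hi => h0 i (hfilter hi))
          fun i hi => h1 i (hfilter hi)) (prod_nonneg fun i hi => h0 i (hfilter hi))
    _ ≤ c ^ #(t.filter p) := by
        rw [mul_one, ← prod_const]
        exact prod_le_prod (fun i hi => h0 i (hfilter hi))
          fun i hi => hp i (hfilter hi) (mem_filter.1 hi).2

lemma norm_Bstar_le {s : ℕ} (hs : 0 < s) {a b : ℕ} (ha : 1 ≤ a) (hab : a ≤ b) {D : Finset ℕ}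
    (hD : D ⊆ range s) (h0 : 0 ∈ D) (h1 : 1 ∈ D) (ξ : ℤ) :
    ‖Bstar s a b D ξ‖ ≤
      (1 - 4 / (#D * (s : ℝ) ^ 4)) ^
        (((Finset.Ico a b).filter fun j =>
          1 ≤ digitOf s ξ.natAbs (j - 1) + digitOf s ξ.natAbs j * s ∧
          digitOf s ξ.natAbs (j - 1) + digitOf s ξ.natAbs j * s ≤ s ^ 2 - 2).card) := by
  rw [Bstar_eq_prod_gfun hs hD ⟨0, h0⟩ ξ hab, norm_prod]
  refine prod_le_pow_card_filter _ _ (fun _ _ => norm_nonneg _)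
    (fun j _ => norm_gfun_le_one s D ξ _) ?_
  rintro j hj ⟨hm1, hm2⟩
  obtain ⟨i, rfl⟩ : ∃ i, j = i + 1 := ⟨j - 1, by have := (mem_Ico.1 hj).1; omega⟩
  rw [Nat.add_sub_cancel] at hm1 hm2
  exact norm_gfun_le_of_digit_pair hs h0 h1 ξ i hm1 hm2

/-- Lemma 11.1(b) (Pramanik–Zhang): there is an absolute constant `c₀ > 0` such that,
with `J̄` the number of indices `a ≤ j ≤ b−1` for which the adjacent base-`s` digit
pair of `|ξ|` is non-extremal, one has `|𝔅*(ξ)| ≤ (1 − c₀/(r s⁴))^J̄` and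
`|ℭ(ξ)| ≤ (1 − c₀/s⁵)^J̄`. -/
theorem Bstar_Cfun_geometric_decay :
    ∃ c₀ : ℝ, 0 < c₀ ∧
      ∀ s a b : ℕ, ∀ D : Finset ℕ, 2 ≤ s → 1 ≤ a → a < b →
        D ⊆ Finset.range s → 0 ∈ D → 1 ∈ D →
        ∀ ξ : ℤ, ξ ≠ 0 →
          ‖Bstar s a b D ξ‖ ≤
            (1 - c₀ / (D.card * (s : ℝ) ^ 4)) ^
              (((Finset.Ico a b).filter fun j =>
                1 ≤ digitOf s ξ.natAbs (j - 1) + digitOf s ξ.natAbs j * s ∧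
                digitOf s ξ.natAbs (j - 1) + digitOf s ξ.natAbs j * s ≤ s ^ 2 - 2).card) ∧
          ‖Cfun s a b ξ‖ ≤
            (1 - c₀ / (s : ℝ) ^ 5) ^
              (((Finset.Ico a b).filter fun j =>
                1 ≤ digitOf s ξ.natAbs (j - 1) + digitOf s ξ.natAbs j * s ∧
                digitOf s ξ.natAbs (j - 1) + digitOf s ξ.natAbs j * s ≤ s ^ 2 - 2).card) := by
  refine ⟨4, by norm_num, fun s a b D hs ha hab hD h0 h1 ξ _ => ?_⟩
  have hs0 : 0 < s := by omega
  refine ⟨norm_Bstar_le hs0 ha hab.le hD h0 h1 ξ, ?_⟩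
  have hdigits := norm_Bstar_le hs0 ha hab.le subset_rfl (mem_range.2 hs0)
    (mem_range.2 (by omega)) ξ
  rwa [card_range, ← pow_succ', ← Cfun_eq_Bstar_range hs0] at hdigits
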